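/- arXiv:1908.11195 — 2 statements merged into one kernel-verified Lean document; each statement's English description precedes it below -/
import Mathlib

section
/- For every q with 0 < q ≤ 1, the quantity (∑_{j=1}^{n} Γ(n-j+q)/Γ(n-j+1)) / n^q tends to 1/q as n → ∞. -/
/-!
Since `Γ(x + 1) = x Γ(x)`, the sum telescopes: `q ∑_{k<n} Γ(k + q) / Γ(k + 1) = Γ(n + q) / Γ(n)`.
Euler's limit formula `n^q n! / (q (q + 1) ⋯ (q + n)) → Γ(q)` gives Wendel's limit
`Γ(n + q) / (Γ(n) n^q) → 1`, whence the sum divided by `n^q` tends to `1 / q`.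
-/

open Filter Finset Real Topology
open scoped Nat

lemma sum_Icc_natCast_sub_eq_sum_range {M : Type*} [AddCommMonoid M] (f : ℝ → M) (n : ℕ) :
    ∑ j ∈ Icc 1 n, f ((n : ℝ) - j) = ∑ k ∈ range n, f k := by
  refine sum_nbij' (fun j => n - j) (fun k => n - k) ?_ ?_ ?_ ?_ ?_ <;>
    intro j hj <;> simp only [mem_Icc, mem_range] at hj ⊢
  all_goals first | omega | rw [Nat.cast_sub hj.2]

namespace Real

lemma Gamma_mul_prod_range_add {s : ℝ} (hs : 0 < s) (n : ℕ) :
    Gamma s * ∏ j ∈ range n, (s + j) = Gamma (n + s) := by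
  induction n with
  | zero => simp
  | succ n ih =>
    rw [prod_range_succ, ← mul_assoc, ih, Nat.cast_succ, add_right_comm,
      Gamma_add_one (by positivity), mul_comm, add_comm s]

-- The convention `Γ 0 = 0` makes the telescoping term `Γ(k + s) / Γ k` vanish at `k = 0`.
lemma mul_sum_range_Gamma_add_div_Gamma_add_one {s : ℝ} (hs : 0 < s) (n : ℕ) :
    s * ∑ k ∈ range n, Gamma (k + s) / Gamma (k + 1) = Gamma (n + s) / Gamma n := by
  have step (k : ℕ) : s * (Gamma (k + s) / Gamma (k + 1)) =
      Gamma ((k + 1 : ℕ) + s) / Gamma (k + 1 : ℕ) - Gamma (k + s) / Gamma k := by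
    rcases k.eq_zero_or_pos with rfl | hk
    · simp [add_comm (1 : ℝ), Gamma_add_one hs.ne']
    · have hk' : (0 : ℝ) < k := by exact_mod_cast hk
      push_cast
      rw [add_right_comm, Gamma_add_one (show (k : ℝ) + s ≠ 0 by positivity),
        Gamma_add_one hk'.ne']
      have := Gamma_pos_of_pos hk'
      field_simp
      ring
  simpa [mul_sum, step] using sum_range_sub (fun k : ℕ => Gamma (k + s) / Gamma k) n

lemma Gamma_div_GammaSeq {s : ℝ} (hs : 0 < s) (n : ℕ) :
    Gamma s / GammaSeq s n = Gamma ((n + 1 : ℕ) + s) / ((n : ℝ) ^ s * n !) := by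
  rw [GammaSeq, ← Gamma_mul_prod_range_add hs, div_div_eq_mul_div, mul_comm]

lemma tendsto_Gamma_nat_add_div_Gamma_mul_rpow {s : ℝ} (hs : 0 < s) :
    Tendsto (fun n : ℕ => Gamma (n + s) / (Gamma n * (n : ℝ) ^ s)) atTop (𝓝 1) := by
  have hEuler : Tendsto (fun n => Gamma s / GammaSeq s n) atTop (𝓝 1) := by
    have hΓ := (Gamma_pos_of_pos hs).ne'
    simpa only [div_self hΓ, Pi.div_def] using
      (tendsto_const_nhds (x := Gamma s)).div (GammaSeq_tendsto_Gamma s) hΓ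
  have hratio : Tendsto (fun n : ℕ => (n : ℝ) / (n + s)) atTop (𝓝 1) := by
    simpa using tendsto_natCast_div_add_atTop s
  have hlim := hratio.mul hEuler
  rw [mul_one] at hlim
  refine hlim.congr' ?_
  filter_upwards [eventually_gt_atTop 0] with n hn
  have hn' : (0 : ℝ) < n := by exact_mod_cast hn
  rw [Gamma_div_GammaSeq hs, Nat.cast_succ, add_right_comm, Gamma_add_one (by positivity),
    ← Gamma_nat_eq_factorial, Gamma_add_one hn'.ne']
  have := Gamma_pos_of_pos hn'
  field_simp

end Real

theorem coeff_sum_asymptotic_general (q : ℝ) (hq0 : 0 < q) :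
    Filter.Tendsto
      (fun n : ℕ =>
        (∑ j ∈ Finset.Icc 1 n, Real.Gamma ((n : ℝ) - j + q) / Real.Gamma ((n : ℝ) - j + 1))
          / (n : ℝ) ^ q)
      Filter.atTop (nhds (1 / q)) := by
  have hsum (n : ℕ) :
      (∑ j ∈ Icc 1 n, Gamma ((n : ℝ) - j + q) / Gamma ((n : ℝ) - j + 1)) / (n : ℝ) ^ q =
        Gamma (n + q) / (Gamma n * (n : ℝ) ^ q) / q := by
    rw [sum_Icc_natCast_sub_eq_sum_range (fun x => Gamma (x + q) / Gamma (x + 1)),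
      div_mul_eq_div_div, ← mul_sum_range_Gamma_add_div_Gamma_add_one hq0]
    field_simp
  simpa only [hsum, one_div] using
    (tendsto_Gamma_nat_add_div_Gamma_mul_rpow hq0).div_const q

theorem coeff_sum_asymptotic (q : ℝ) (hq0 : 0 < q) (hq1 : q ≤ 1) :
    Filter.Tendsto
      (fun n : ℕ =>
        (∑ j ∈ Finset.Icc 1 n, Real.Gamma ((n : ℝ) - j + q) / Real.Gamma ((n : ℝ) - j + 1))
          / (n : ℝ) ^ q)
      Filter.atTop (nhds (1 / q)) :=
  coeff_sum_asymptotic_general q hq0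
end

section
/- For 0 < q < 1 and integer n ≥ 1, Γ(n+q)/(q·Γ(n)) − n^q/q is bounded in absolute value by 1/q; equivalently, |Γ(n+q)/Γ(n) − n^q| ≤ 1. -/
/-!
Both bounds come from the log-convexity of `Γ` on `(0, ∞)` together with `Γ (y + 1) = y Γ y`.
Writing `x + s` as a convex combination of `x` and `x + 1` gives Wendel's upper bound
`Γ (x + s) ≤ x ^ s Γ x`; writing `x + 1` as a convex combination of `x + s` and `x + s + 1` gives
the lower bound `x (x + s) ^ (s - 1) Γ x ≤ Γ (x + s)`. Finally
`x (x + s) ^ (s - 1) ≥ x (x + 1) ^ (s - 1) = (x + 1) ^ s - (x + 1) ^ (s - 1) ≥ x ^ s - 1`.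
-/

open Real

namespace Real

variable {x s : ℝ}

theorem Gamma_add_le_Gamma_mul_rpow (hx : 0 < x) (hs₀ : 0 < s) (hs₁ : s < 1) :
    Gamma (x + s) ≤ Gamma x * x ^ s := by
  have hG : 0 < Gamma x := Gamma_pos_of_pos hx
  have hconv := Gamma_mul_add_mul_le_rpow_Gamma_mul_rpow_Gamma hx (by linarith : 0 < x + 1)
    (sub_pos.2 hs₁) hs₀ (sub_add_cancel 1 s)
  calc Gamma (x + s) = Gamma ((1 - s) * x + s * (x + 1)) := by ring_nf
    _ ≤ Gamma x ^ (1 - s) * Gamma (x + 1) ^ s := hconv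
    _ = Gamma x ^ (1 - s) * Gamma x ^ s * x ^ s := by
        rw [Gamma_add_one hx.ne', mul_rpow hx.le hG.le]; ring
    _ = Gamma x * x ^ s := by rw [← rpow_add hG, sub_add_cancel, rpow_one]

theorem mul_Gamma_le_Gamma_add_mul_rpow (hx : 0 < x) (hs₀ : 0 < s) (hs₁ : s < 1) :
    x * Gamma x ≤ Gamma (x + s) * (x + s) ^ (1 - s) := by
  have hxs : 0 < x + s := by linarith
  have hG : 0 < Gamma (x + s) := Gamma_pos_of_pos hxs
  have hconv := Gamma_mul_add_mul_le_rpow_Gamma_mul_rpow_Gamma hxs (by linarith : 0 < x + s + 1)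
    hs₀ (sub_pos.2 hs₁) (add_sub_cancel s 1)
  calc x * Gamma x = Gamma (s * (x + s) + (1 - s) * (x + s + 1)) := by
        rw [← Gamma_add_one hx.ne']; ring_nf
    _ ≤ Gamma (x + s) ^ s * Gamma (x + s + 1) ^ (1 - s) := hconv
    _ = Gamma (x + s) ^ s * Gamma (x + s) ^ (1 - s) * (x + s) ^ (1 - s) := by
        rw [Gamma_add_one hxs.ne', mul_rpow hxs.le hG.le]; ring
    _ = Gamma (x + s) * (x + s) ^ (1 - s) := by rw [← rpow_add hG, add_sub_cancel, rpow_one]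

theorem Gamma_add_div_Gamma_le_rpow (hx : 0 < x) (hs₀ : 0 < s) (hs₁ : s < 1) :
    Gamma (x + s) / Gamma x ≤ x ^ s := by
  rw [div_le_iff₀ (Gamma_pos_of_pos hx), mul_comm]
  exact Gamma_add_le_Gamma_mul_rpow hx hs₀ hs₁

theorem mul_rpow_le_Gamma_add_div_Gamma (hx : 0 < x) (hs₀ : 0 < s) (hs₁ : s < 1) :
    x * (x + s) ^ (s - 1) ≤ Gamma (x + s) / Gamma x := by
  have hxs : 0 < x + s := by linarith
  have hcancel : (x + s) ^ (1 - s) * (x + s) ^ (s - 1) = 1 := by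
    rw [← rpow_add hxs, sub_add_sub_cancel', sub_self, rpow_zero]
  rw [le_div_iff₀ (Gamma_pos_of_pos hx)]
  calc x * (x + s) ^ (s - 1) * Gamma x = x * Gamma x * (x + s) ^ (s - 1) := by ring
    _ ≤ Gamma (x + s) * (x + s) ^ (1 - s) * (x + s) ^ (s - 1) := by
        gcongr ?_ * _
        exact mul_Gamma_le_Gamma_add_mul_rpow hx hs₀ hs₁
    _ = Gamma (x + s) := by rw [mul_assoc, hcancel, mul_one]

theorem rpow_sub_one_le_Gamma_add_div_Gamma (hx : 0 < x) (hs₀ : 0 < s) (hs₁ : s < 1) :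
    x ^ s - 1 ≤ Gamma (x + s) / Gamma x := by
  have hx1 : 0 < x + 1 := by linarith
  have hxs : 0 < x + s := by linarith
  have hsplit : x * (x + 1) ^ (s - 1) = (x + 1) ^ s - (x + 1) ^ (s - 1) := by
    rw [eq_sub_iff_add_eq, ← add_one_mul, ← rpow_one_add' hx1.le (by linarith), add_sub_cancel]
  calc x ^ s - 1 ≤ (x + 1) ^ s - (x + 1) ^ (s - 1) := by
        gcongr
        · linarith
        · exact rpow_le_one_of_one_le_of_nonpos (by linarith) (by linarith)
    _ = x * (x + 1) ^ (s - 1) := hsplit.symm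
    _ ≤ x * (x + s) ^ (s - 1) := by
        gcongr x * ?_
        exact rpow_le_rpow_of_nonpos hxs (by linarith) (by linarith)
    _ ≤ Gamma (x + s) / Gamma x := mul_rpow_le_Gamma_add_div_Gamma hx hs₀ hs₁

theorem abs_Gamma_add_div_Gamma_sub_rpow_le_one (hx : 0 < x) (hs₀ : 0 < s) (hs₁ : s < 1) :
    |Gamma (x + s) / Gamma x - x ^ s| ≤ 1 := by
  rw [abs_sub_le_iff]
  constructor
  · linarith [Gamma_add_div_Gamma_le_rpow hx hs₀ hs₁]
  · linarith [rpow_sub_one_le_Gamma_add_div_Gamma hx hs₀ hs₁]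

end Real

theorem gamma_ratio_bound (q : ℝ) (hq : q ∈ Set.Ioo (0:ℝ) 1) :
    ∀ n : ℕ, 1 ≤ n →
      |Real.Gamma ((n : ℝ) + q) / (q * Real.Gamma (n : ℝ)) - (n : ℝ) ^ q / q| ≤ 1 / q ∧
      |Real.Gamma ((n : ℝ) + q) / Real.Gamma (n : ℝ) - (n : ℝ) ^ q| ≤ 1 := by
  obtain ⟨hq₀, hq₁⟩ := hq
  intro n hn
  have hbound := abs_Gamma_add_div_Gamma_sub_rpow_le_one (by exact_mod_cast hn : (0 : ℝ) < n) hq₀ hq₁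
  refine ⟨?_, hbound⟩
  have hscale : Gamma (n + q) / (q * Gamma n) - (n : ℝ) ^ q / q
      = (Gamma (n + q) / Gamma n - (n : ℝ) ^ q) / q := by
    field_simp
  rw [hscale, abs_div, abs_of_pos hq₀]
  gcongr
end
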